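/- The density result of Theorem 1 holds with the sigmoid replaced by the ReLU function: finite linear combinations of x̄ ↦ max(0, a(⟨x̄, z⟩² − c)), with z a unit vector in the admissible set, a > 0, c ∈ [0,1], are dense in L²(Ḡ, μ), where Ḡ is a subset of the unit sphere in ℝ^N contained in {x : x_{d+1} ≥ δ} for some δ > 0 and μ is a finite Borel measure. -/

import Mathlib

open MeasureTheory Set Filter Topology
open scoped RealInnerProductSpace

/-!
If `g ∈ L²(μ|G)` is orthogonal to every `max 0 (⟪x, z⟫ ^ 2 - c)`, then, because
`t ^ (n + 2) = (n + 1) (n + 2) ∫₀¹ max 0 (t - c) c ^ n dc` for `t ∈ [0, 1]`, it is orthogonal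
to every power `⟪x, z⟫ ^ (2 m + 2)` with `z` in the cap, hence by homogeneity with `z` in the
open cone over the cap. Expanding `⟪x, u + s v⟫ ^ (p + 2)` in `s` (polarization) kills every
product of squares `∏ ⟪x, zᵢ⟫ ^ 2`, and `1 = ∑ ⟪x, bᵢ⟫ ^ 2` on the sphere kills the constants.
These functions span an algebra that separates the points of the cap, as the cap contains no
antipodal pair, so by Stone–Weierstrass `g` is orthogonal to every continuous function and
vanishes. For `1 ≤ δ` the cap is at most `{e}` and a single neuron suffices.
-/

section CompactSupport

variable {E : Type*} [TopologicalSpace E] {K : Set E}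

lemma exists_mem_subalgebra_abs_sub_lt (hK : IsCompact K) (A : Subalgebra ℝ C(E, ℝ))
    (hA : ∀ x ∈ K, ∀ y ∈ K, x ≠ y → ∃ a ∈ A, a x ≠ a y) (u : C(E, ℝ)) {ε : ℝ} (hε : 0 < ε) :
    ∃ a ∈ A, ∀ x ∈ K, |u x - a x| < ε := by
  have : CompactSpace K := isCompact_iff_compactSpace.1 hK
  let res := ContinuousMap.compRightAlgHom ℝ ℝ ((ContinuousMap.id E).restrict K)
  have hsep : (A.map res).SeparatesPoints := by
    rintro x y hxy
    obtain ⟨a, ha, hne⟩ := hA x x.2 y y.2 (Subtype.coe_injective.ne hxy)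
    exact ⟨_, ⟨res a, ⟨a, ha, rfl⟩, rfl⟩, hne⟩
  have hu : res u ∈ closure (A.map res : Set C(K, ℝ)) := by
    rw [← Subalgebra.topologicalClosure_coe,
      ContinuousMap.subalgebra_topologicalClosure_eq_top_of_separatesPoints _ hsep]
    trivial
  obtain ⟨_, ⟨a, ha, rfl⟩, hdist⟩ := Metric.mem_closure_iff.1 hu ε hε
  refine ⟨a, ha, fun x hx => ?_⟩
  rw [← Real.dist_eq]
  exact (ContinuousMap.dist_apply_le_dist (f := res u) (g := res a) ⟨x, hx⟩).trans_lt hdist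

variable [MeasurableSpace E] {ν : Measure E} {g : E → ℝ}

lemma exists_ae_norm_le_of_ae_mem_isCompact (hK : IsCompact K) (hνK : ∀ᵐ x ∂ν, x ∈ K)
    {φ : E → ℝ} (hφ : Continuous φ) : ∃ C, ∀ᵐ x ∂ν, ‖φ x‖ ≤ C := by
  obtain ⟨C, hC⟩ := hK.exists_bound_of_continuousOn hφ.continuousOn
  exact ⟨C, hνK.mono fun x hx => hC x hx⟩

variable [OpensMeasurableSpace E]

lemma memLp_of_ae_mem_isCompact [IsFiniteMeasure ν] (hK : IsCompact K) (hνK : ∀ᵐ x ∂ν, x ∈ K)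
    {φ : E → ℝ} (hφ : Continuous φ) (p : ENNReal) : MemLp φ p ν :=
  have ⟨_, hC⟩ := exists_ae_norm_le_of_ae_mem_isCompact hK hνK hφ
  MemLp.of_bound hφ.aestronglyMeasurable _ hC

lemma integrable_mul_of_ae_mem_isCompact (hK : IsCompact K) (hνK : ∀ᵐ x ∂ν, x ∈ K)
    {φ : E → ℝ} (hφ : Continuous φ) (hg : Integrable g ν) :
    Integrable (fun x => φ x * g x) ν :=
  have ⟨_, hC⟩ := exists_ae_norm_le_of_ae_mem_isCompact hK hνK hφ
  hg.bdd_mul hφ.aestronglyMeasurable hC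

lemma integral_mul_eq_zero_of_mem_adjoin (hK : IsCompact K) (hνK : ∀ᵐ x ∂ν, x ∈ K)
    (hg : Integrable g ν) {S : Set C(E, ℝ)}
    (hS : ∀ l : List C(E, ℝ), (∀ a ∈ l, a ∈ S) → ∫ x, l.prod x * g x ∂ν = 0) {a : C(E, ℝ)}
    (ha : a ∈ Algebra.adjoin ℝ S) : ∫ x, a x * g x ∂ν = 0 := by
  have hint : ∀ b : C(E, ℝ), Integrable (fun x => b x * g x) ν := fun b =>
    integrable_mul_of_ae_mem_isCompact hK hνK b.continuous hg
  rw [← Subalgebra.mem_toSubmodule, Algebra.adjoin_eq_span] at ha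
  induction ha using Submodule.span_induction with
  | mem a ha =>
    obtain ⟨l, hl, rfl⟩ := Submonoid.exists_list_of_mem_closure ha
    exact hS l hl
  | zero => simp
  | add a b _ _ ha hb => simp [add_mul, integral_add (hint a) (hint b), ha, hb]
  | smul c a _ ha => simp [mul_assoc, integral_const_mul, ha]

lemma integral_mul_eq_zero_of_separatesPoints (hK : IsCompact K) (hνK : ∀ᵐ x ∂ν, x ∈ K)
    (hg : Integrable g ν) {S : Set C(E, ℝ)}
    (hsep : ∀ x ∈ K, ∀ y ∈ K, x ≠ y → ∃ a ∈ S, a x ≠ a y)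
    (hS : ∀ l : List C(E, ℝ), (∀ a ∈ l, a ∈ S) → ∫ x, l.prod x * g x ∂ν = 0) (u : C(E, ℝ)) :
    ∫ x, u x * g x ∂ν = 0 := by
  set C := ∫ x, |g x| ∂ν
  have hC : 0 ≤ C := integral_nonneg fun x => abs_nonneg _
  refine eq_of_forall_dist_le fun ε hε => ?_
  obtain ⟨a, ha, hua⟩ :=
    exists_mem_subalgebra_abs_sub_lt hK (Algebra.adjoin ℝ S)
      (fun x hx y hy hxy => (hsep x hx y hy hxy).imp fun a ha => ⟨Algebra.subset_adjoin ha.1, ha.2⟩)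
      u (show 0 < ε / (C + 1) by positivity)
  have hint : ∀ b : C(E, ℝ), Integrable (fun x => b x * g x) ν := fun b =>
    integrable_mul_of_ae_mem_isCompact hK hνK b.continuous hg
  calc dist (∫ x, u x * g x ∂ν) 0 = ‖∫ x, (u - a) x * g x ∂ν‖ := by
        simp only [ContinuousMap.sub_apply, sub_mul, integral_sub (hint u) (hint a),
          integral_mul_eq_zero_of_mem_adjoin hK hνK hg hS ha, sub_zero, dist_zero_right]
    _ ≤ ∫ x, ε / (C + 1) * |g x| ∂ν := by
        refine norm_integral_le_of_norm_le (hg.abs.const_mul _) (hνK.mono fun x hx => ?_)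
        rw [norm_mul, Real.norm_eq_abs, Real.norm_eq_abs]
        exact mul_le_mul_of_nonneg_right (hua x hx).le (abs_nonneg _)
    _ = ε * (C / (C + 1)) := by rw [integral_const_mul]; ring
    _ ≤ ε := mul_le_of_le_one_right hε.le ((div_le_one (by positivity)).2 (by linarith))

end CompactSupport

lemma intervalIntegral_max_sub_mul_pow {t : ℝ} (ht : t ∈ Icc 0 1) (n : ℕ) :
    ∫ c in (0:ℝ)..1, max 0 (t - c) * c ^ n = t ^ (n + 2) / ((n + 1) * (n + 2)) := by
  have hint : ∀ a b : ℝ, IntervalIntegrable (fun c => max 0 (t - c) * c ^ n) volume a b :=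
    fun a b => (by fun_prop : Continuous fun c : ℝ => max 0 (t - c) * c ^ n).intervalIntegrable a b
  have hright : ∫ c in t..1, max 0 (t - c) * c ^ n = 0 := by
    refine (intervalIntegral.integral_congr fun c hc => ?_).trans intervalIntegral.integral_zero
    rw [uIcc_of_le ht.2] at hc
    simp [max_eq_left (sub_nonpos.2 hc.1)]
  have hleft : ∫ c in (0:ℝ)..t, max 0 (t - c) * c ^ n =
      ∫ c in (0:ℝ)..t, (t * c ^ n - c ^ (n + 1)) := by
    refine intervalIntegral.integral_congr fun c hc => ?_
    rw [uIcc_of_le ht.1] at hc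
    rw [max_eq_right (sub_nonneg.2 hc.2)]
    ring
  rw [← intervalIntegral.integral_add_adjacent_intervals (hint 0 t) (hint t 1), hright, add_zero,
    hleft, intervalIntegral.integral_sub (f := fun c => t * c ^ n)
      ((continuous_const.mul (continuous_pow n)).intervalIntegrable _ _)
      ((continuous_pow (n + 1)).intervalIntegrable _ _),
    intervalIntegral.integral_const_mul, integral_pow, integral_pow]
  field_simp
  push_cast
  ring

lemma integral_pow_mul_eq_zero_of_integral_max_sub_mul_eq_zero {α : Type*} [MeasurableSpace α]
    {ν : Measure α} [SFinite ν] {q g : α → ℝ} (hq : Measurable q)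
    (hq01 : ∀ᵐ x ∂ν, q x ∈ Icc 0 1) (hg : Integrable g ν)
    (h : ∀ c ∈ Icc (0:ℝ) 1, ∫ x, max 0 (q x - c) * g x ∂ν = 0) {m : ℕ} (hm : 1 ≤ m) :
    ∫ x, q x ^ m * g x ∂ν = 0 := by
  obtain ⟨n, rfl | rfl⟩ : ∃ n, m = 1 ∨ m = n + 2 := ⟨m - 2, by omega⟩
  · rw [← h 0 ⟨le_rfl, zero_le_one⟩]
    refine integral_congr_ae (hq01.mono fun x hx => ?_)
    simp [max_eq_right hx.1]
  set ρ := (volume : Measure ℝ).restrict (Ioc 0 1)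
  let F : α → ℝ → ℝ := fun x c => max 0 (q x - c) * c ^ n * g x
  have hF : Integrable (Function.uncurry F) (ν.prod ρ) := by
    refine Integrable.mono' (hg.abs.mul_prod (integrable_const (1:ℝ))) ?_ ?_
    · exact ((by fun_prop : Continuous fun p : ℝ × ℝ => max 0 (p.1 - p.2) * p.2 ^ n).measurable.comp
        ((hq.comp measurable_fst).prodMk measurable_snd)).aestronglyMeasurable.mul
        (hg.aestronglyMeasurable.comp_quasiMeasurePreserving Measure.quasiMeasurePreserving_fst)
    · filter_upwards [Measure.quasiMeasurePreserving_fst.ae hq01,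
        Measure.quasiMeasurePreserving_snd.ae (ae_restrict_mem measurableSet_Ioc)] with p hp hc
      have h1 : |max 0 (q p.1 - p.2)| ≤ 1 := by
        rw [abs_of_nonneg (le_max_left _ _)]
        exact max_le zero_le_one (by linarith [hp.2, hc.1])
      have h2 : |p.2 ^ n| ≤ 1 := by
        rw [abs_pow, abs_of_pos hc.1]
        exact pow_le_one₀ hc.1.le hc.2
      simp only [Function.uncurry, F, Real.norm_eq_abs, abs_mul, mul_one]
      exact mul_le_of_le_one_left (abs_nonneg _) (mul_le_one₀ h1 (abs_nonneg _) h2)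
  have hinner : ∀ᵐ x ∂ν, q x ^ (n + 2) * g x = ((n + 1) * (n + 2)) * ∫ c, F x c ∂ρ := by
    filter_upwards [hq01] with x hx
    rw [integral_mul_const, ← intervalIntegral.integral_of_le zero_le_one,
      intervalIntegral_max_sub_mul_pow hx]
    field_simp
  have hslice : ∀ c ∈ Ioc (0:ℝ) 1, ∫ x, F x c ∂ν = 0 := fun c hc => by
    simp only [F, mul_right_comm _ (c ^ n), integral_mul_const, h c (Ioc_subset_Icc_self hc),
      zero_mul]
  rw [integral_congr_ae hinner, integral_const_mul, integral_integral_swap hF,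
    setIntegral_congr_fun measurableSet_Ioc hslice, integral_zero, mul_zero]

open Polynomial in
lemma eq_zero_of_eventually_sum_pow_mul_eq_zero {b : ℕ → ℝ} {n : ℕ}
    (h : ∀ᶠ s in 𝓝 (0:ℝ), ∑ j ∈ Finset.range n, s ^ j * b j = 0) {j : ℕ} (hj : j < n) :
    b j = 0 := by
  let P : ℝ[X] := ∑ j ∈ Finset.range n, C (b j) * X ^ j
  have hP : P = 0 := P.eq_zero_of_infinite_isRoot <| infinite_of_mem_nhds 0 <|
    h.mono fun s hs => by
      simpa only [P, IsRoot, eval_finsetSum, eval_mul, eval_C, eval_pow, eval_X, mul_comm] using hs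
  simpa [P, finsetSum_coeff, coeff_C_mul_X_pow, hj] using congr_arg (coeff · j) hP

section Polarization

variable {E : Type*} [NormedAddCommGroup E] [InnerProductSpace ℝ E] [MeasurableSpace E]
  [OpensMeasurableSpace E] {ν : Measure E} {K : Set E} {g φ : E → ℝ}

lemma integral_inner_add_smul_pow_mul (hK : IsCompact K) (hνK : ∀ᵐ x ∂ν, x ∈ K)
    (hg : Integrable g ν) (hφ : Continuous φ) (u v : E) (p : ℕ) (s : ℝ) :
    ∫ x, ⟪x, u + s • v⟫ ^ p * (φ x * g x) ∂ν = ∑ j ∈ Finset.range (p + 1),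
      s ^ j * (p.choose j * ∫ x, ⟪x, v⟫ ^ j * ⟪x, u⟫ ^ (p - j) * (φ x * g x) ∂ν) := by
  have hexpand : ∀ x, ⟪x, u + s • v⟫ ^ p * (φ x * g x) = ∑ j ∈ Finset.range (p + 1),
      s ^ j * (p.choose j * (⟪x, v⟫ ^ j * ⟪x, u⟫ ^ (p - j) * φ x * g x)) := fun x => by
    rw [inner_add_right, real_inner_smul_right, add_comm, add_pow, Finset.sum_mul]
    refine Finset.sum_congr rfl fun j _ => ?_
    ring
  simp_rw [hexpand]
  rw [integral_finsetSum _ fun j _ => ((integrable_mul_of_ae_mem_isCompact hK hνK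
    (by fun_prop) hg).const_mul _).const_mul _]
  simp_rw [integral_const_mul, mul_assoc]

lemma integral_inner_sq_mul_inner_pow_mul_eq_zero (hK : IsCompact K) (hνK : ∀ᵐ x ∂ν, x ∈ K)
    (hg : Integrable g ν) (hφ : Continuous φ) {U : Set E} (hU : IsOpen U) {p : ℕ}
    (h : ∀ u ∈ U, ∫ x, ⟪x, u⟫ ^ (p + 2) * (φ x * g x) ∂ν = 0) {u : E} (hu : u ∈ U) (v : E) :
    ∫ x, ⟪x, v⟫ ^ 2 * ⟪x, u⟫ ^ p * (φ x * g x) ∂ν = 0 := by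
  have hs : ∀ᶠ s in 𝓝 (0:ℝ), u + s • v ∈ U :=
    (Continuous.tendsto' (by fun_prop) 0 u (by simp)).eventually (hU.mem_nhds hu)
  -- `∫ ⟪x, u + s • v⟫ ^ (p + 2) * φ x * g x` is a polynomial in `s` vanishing near `0`
  have hcoeff := eq_zero_of_eventually_sum_pow_mul_eq_zero (j := 2) (hs.mono fun s hs =>
    (integral_inner_add_smul_pow_mul hK hνK hg hφ u v (p + 2) s).symm.trans (h _ hs)) (by omega)
  rw [Nat.add_sub_cancel, mul_eq_zero] at hcoeff
  exact hcoeff.resolve_left (Nat.cast_ne_zero.2 (Nat.choose_pos (by omega)).ne')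

lemma integral_inner_pow_mul_prod_inner_sq_mul_eq_zero (hK : IsCompact K)
    (hνK : ∀ᵐ x ∂ν, x ∈ K) (hg : Integrable g ν) {U : Set E} (hU : IsOpen U)
    (h : ∀ u ∈ U, ∀ m : ℕ, ∫ x, ⟪x, u⟫ ^ (2 * m + 2) * g x ∂ν = 0) (L : List E) :
    ∀ u ∈ U, ∀ m : ℕ,
      ∫ x, ⟪x, u⟫ ^ (2 * m + 2) * ((L.map fun z => ⟪x, z⟫ ^ 2).prod * g x) ∂ν = 0 := by
  induction L with
  | nil => simpa using h
  | cons v L ih =>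
    intro u hu m
    have := integral_inner_sq_mul_inner_pow_mul_eq_zero hK hνK hg (by fun_prop) hU
      (fun u hu => ih u hu (m + 1)) hu v
    rw [← this]
    congr 1 with x
    simp only [List.map_cons, List.prod_cons]
    ring

lemma integral_eq_zero_of_integral_inner_sq_mul_eq_zero [FiniteDimensional ℝ E]
    (hK : IsCompact K) (hνK : ∀ᵐ x ∂ν, x ∈ K) (hg : Integrable g ν)
    (hsphere : ∀ᵐ x ∂ν, ‖x‖ = 1) (h : ∀ v : E, ∫ x, ⟪x, v⟫ ^ 2 * g x ∂ν = 0) :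
    ∫ x, g x ∂ν = 0 := by
  let b := stdOrthonormalBasis ℝ E
  have hsum : ∀ᵐ x ∂ν, g x = ∑ i, ⟪x, b i⟫ ^ 2 * g x := hsphere.mono fun x hx => by
    rw [← Finset.sum_mul, b.sum_sq_inner_left, hx, one_pow, one_mul]
  rw [integral_congr_ae hsum, integral_finsetSum _ fun i _ =>
    integrable_mul_of_ae_mem_isCompact hK hνK (by fun_prop) hg]
  exact Finset.sum_eq_zero fun i _ => h (b i)

lemma integral_prod_inner_sq_mul_eq_zero [FiniteDimensional ℝ E] (hK : IsCompact K)
    (hνK : ∀ᵐ x ∂ν, x ∈ K) (hg : Integrable g ν) (hsphere : ∀ᵐ x ∂ν, ‖x‖ = 1) {U : Set E}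
    (hU : IsOpen U) (hUne : U.Nonempty)
    (h : ∀ u ∈ U, ∀ m : ℕ, ∫ x, ⟪x, u⟫ ^ (2 * m + 2) * g x ∂ν = 0) (L : List E) :
    ∫ x, (L.map fun z => ⟪x, z⟫ ^ 2).prod * g x ∂ν = 0 := by
  obtain ⟨u, hu⟩ := hUne
  cases L with
  | nil =>
    simp only [List.map_nil, List.prod_nil, one_mul]
    refine integral_eq_zero_of_integral_inner_sq_mul_eq_zero hK hνK hg hsphere fun v => ?_
    simpa using integral_inner_sq_mul_inner_pow_mul_eq_zero hK hνK hg continuous_const hU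
      (p := 0) (φ := fun _ => 1) (by simpa using fun u hu => h u hu 0) hu v
  | cons v L =>
    have := integral_inner_sq_mul_inner_pow_mul_eq_zero hK hνK hg (by fun_prop) hU (p := 0)
      (fun u hu => integral_inner_pow_mul_prod_inner_sq_mul_eq_zero hK hνK hg hU h L u hu 0) hu v
    rw [← this]
    congr 1 with x
    simp only [List.map_cons, List.prod_cons]
    ring

end Polarization

lemma exists_integral_sum_mul_sub_sq_lt {α ι : Type*} [MeasurableSpace α] {ν : Measure α}
    {φ : ι → α → ℝ} (hφ : ∀ i, MemLp (φ i) 2 ν)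
    (hann : ∀ g : Lp ℝ 2 ν, (∀ i, ∫ x, φ i x * g x ∂ν = 0) → g = 0) {f : α → ℝ}
    (hf : MemLp f 2 ν) {ε : ℝ} (hε : 0 < ε) :
    ∃ (n : ℕ) (i : Fin n → ι) (c : Fin n → ℝ), ∫ x, (∑ j, c j * φ (i j) x - f x) ^ 2 ∂ν < ε := by
  let S := Submodule.span ℝ (range fun i => (hφ i).toLp)
  have hS : S.topologicalClosure = ⊤ := by
    rw [Submodule.topologicalClosure_eq_top_iff, Submodule.eq_bot_iff]
    refine fun g hg => hann g fun i => ?_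
    rw [← (Submodule.mem_orthogonal S g).1 hg _ (Submodule.subset_span ⟨i, rfl⟩), L2.inner_def]
    refine integral_congr_ae ((hφ i).coeFn_toLp.mono fun x hx => ?_)
    simp [hx, mul_comm]
  have hfS : hf.toLp f ∈ closure (S : Set (Lp ℝ 2 ν)) := by
    rw [← Submodule.topologicalClosure_coe, hS]
    trivial
  obtain ⟨s, hs, hdist⟩ := Metric.mem_closure_iff.1 hfS (√ε) (by positivity)
  obtain ⟨n, c, w, rfl⟩ := Submodule.mem_span_set'.1 hs
  choose i hi using fun j => (w j).2
  refine ⟨n, i, c, ?_⟩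
  have hae : (fun x => ∑ j, c j * φ (i j) x - f x) =ᵐ[ν]
      ⇑(∑ j, c j • (w j : Lp ℝ 2 ν) - hf.toLp f) := by
    have hw : ∀ᵐ x ∂ν, ∀ j, (w j : Lp ℝ 2 ν) x = φ (i j) x :=
      ae_all_iff.2 fun j => hi j ▸ (hφ (i j)).coeFn_toLp
    filter_upwards [Lp.coeFn_sub (∑ j, c j • (w j : Lp ℝ 2 ν)) (hf.toLp f),
      Lp.coeFn_fun_finsetSum Finset.univ fun j => c j • (w j : Lp ℝ 2 ν),
      ae_all_iff.2 fun j => Lp.coeFn_smul (c j) (w j : Lp ℝ 2 ν), hw, hf.coeFn_toLp]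
      with x hsub hsum hsmul hw hfx
    rw [hsub, Pi.sub_apply, hsum, hfx]
    simp only [hsmul, Pi.smul_apply, smul_eq_mul, hw]
  calc ∫ x, (∑ j, c j * φ (i j) x - f x) ^ 2 ∂ν
      = ‖∑ j, c j • (w j : Lp ℝ 2 ν) - hf.toLp f‖ ^ 2 := by
        rw [← real_inner_self_eq_norm_sq, L2.inner_def]
        exact integral_congr_ae (hae.mono fun x hx => by simp [hx, sq])
    _ < √ε ^ 2 := by
        rw [← dist_eq_norm, dist_comm]
        exact pow_lt_pow_left₀ hdist dist_nonneg two_ne_zero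
    _ = ε := Real.sq_sqrt hε.le

section SphericalCap

variable {E : Type*} [NormedAddCommGroup E] [InnerProductSpace ℝ E]

def sphericalCap (e : E) (δ : ℝ) : Set E := {x | ‖x‖ = 1 ∧ δ ≤ ⟪x, e⟫}

def innerSq (z : E) : C(E, ℝ) := ⟨fun x => ⟪x, z⟫ ^ 2, by fun_prop⟩

@[simp]
lemma innerSq_apply (z x : E) : innerSq z x = ⟪x, z⟫ ^ 2 := rfl

lemma list_prod_map_innerSq_apply (L : List E) (x : E) :
    (L.map innerSq).prod x = (L.map fun z => ⟪x, z⟫ ^ 2).prod := by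
  induction L with
  | nil => simp
  | cons z L ih => simp [ih]

variable {e : E} {δ : ℝ}

lemma mem_sphericalCap_single {N : ℕ} {k : Fin N} {x : EuclideanSpace ℝ (Fin N)} :
    x ∈ sphericalCap (EuclideanSpace.single k 1) δ ↔ ‖x‖ = 1 ∧ δ ≤ x k := by
  simp [sphericalCap, EuclideanSpace.inner_single_right]

lemma isCompact_sphericalCap [ProperSpace E] (e : E) (δ : ℝ) : IsCompact (sphericalCap e δ) :=
  (isCompact_sphere 0 1).of_isClosed_subset
    ((isClosed_eq continuous_norm continuous_const).inter
      (isClosed_le continuous_const (by fun_prop : Continuous fun x : E => ⟪x, e⟫)))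
    fun _ hx => mem_sphere_zero_iff_norm.2 hx.1

lemma inner_sq_mem_Icc_of_norm_le_one {x z : E} (hx : ‖x‖ ≤ 1) (hz : ‖z‖ ≤ 1) :
    ⟪x, z⟫ ^ 2 ∈ Icc 0 1 := by
  refine ⟨sq_nonneg _, sq_le_one_iff_abs_le_one _ |>.2 ?_⟩
  calc |⟪x, z⟫| ≤ ‖x‖ * ‖z‖ := abs_real_inner_le_norm x z
    _ ≤ 1 := mul_le_one₀ hx (norm_nonneg z) hz

lemma inner_sq_ne_one_of_mem_sphericalCap (hδ : 0 < δ) {x y : E} (hx : x ∈ sphericalCap e δ)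
    (hy : y ∈ sphericalCap e δ) (hxy : x ≠ y) : ⟪x, y⟫ ^ 2 ≠ 1 := by
  rw [Ne, sq_eq_one_iff, inner_eq_one_iff_of_norm_eq_one hx.1 hy.1,
    inner_eq_neg_one_iff_of_norm_eq_one hx.1 hy.1]
  rintro (rfl | rfl)
  · exact hxy rfl
  · have := hy.2
    have := hx.2
    rw [inner_neg_left] at this
    linarith

lemma norm_inv_smul_mem_sphericalCap {u : E} (hu : δ * ‖u‖ < ⟪u, e⟫) :
    ‖u‖⁻¹ • u ∈ sphericalCap e δ := by
  have hu0 : u ≠ 0 := by rintro rfl; simp at hu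
  refine ⟨norm_smul_inv_norm hu0, ?_⟩
  rw [real_inner_smul_left, le_inv_mul_iff₀ (norm_pos_iff.2 hu0), mul_comm]
  exact hu.le

lemma eq_of_mem_sphericalCap_of_one_le (he : ‖e‖ = 1) (hδ : 1 ≤ δ) {x : E}
    (hx : x ∈ sphericalCap e δ) : x = e := by
  refine (inner_eq_one_iff_of_norm_eq_one hx.1 he).1 (le_antisymm ?_ (hδ.trans hx.2))
  simpa [hx.1, he] using real_inner_le_norm x e

lemma ae_eq_zero_of_integral_max_inner_sq_sub_mul_eq_zero [FiniteDimensional ℝ E]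
    [MeasurableSpace E] [BorelSpace E] (he : ‖e‖ = 1) (hδ0 : 0 < δ) (hδ1 : δ < 1)
    {ν : Measure E} [SFinite ν] (hν : ∀ᵐ x ∂ν, x ∈ sphericalCap e δ) {g : E → ℝ}
    (hg : Integrable g ν)
    (h : ∀ z ∈ sphericalCap e δ, ∀ c ∈ Icc (0:ℝ) 1, ∫ x, max 0 (⟪x, z⟫ ^ 2 - c) * g x ∂ν = 0) :
    g =ᵐ[ν] 0 := by
  have hK := isCompact_sphericalCap e δ
  have hcap : ∀ z ∈ sphericalCap e δ, ∀ m : ℕ, ∫ x, ⟪x, z⟫ ^ (2 * m + 2) * g x ∂ν = 0 :=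
    fun z hz m => by
      simpa [← pow_mul, mul_add] using integral_pow_mul_eq_zero_of_integral_max_sub_mul_eq_zero
        (q := fun x => ⟪x, z⟫ ^ 2) (by fun_prop : Continuous _).measurable
        (hν.mono fun x hx => inner_sq_mem_Icc_of_norm_le_one hx.1.le hz.1.le) hg (h z hz)
        (m := m + 1) (by omega)
  have hcone : ∀ u ∈ {u : E | δ * ‖u‖ < ⟪u, e⟫}, ∀ m : ℕ,
      ∫ x, ⟪x, u⟫ ^ (2 * m + 2) * g x ∂ν = 0 := fun u hu m => by
    have hu0 : ‖u‖ ≠ 0 := norm_ne_zero_iff.2 fun hu0 => by simp [hu0] at hu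
    have hscale : ∀ x : E, ⟪x, u⟫ = ‖u‖ * ⟪x, ‖u‖⁻¹ • u⟫ := fun x => by
      rw [real_inner_smul_right, mul_inv_cancel_left₀ hu0]
    simp_rw [hscale, mul_pow, mul_assoc, integral_const_mul,
      hcap _ (norm_inv_smul_mem_sphericalCap hu) m, mul_zero]
  have hprod := integral_prod_inner_sq_mul_eq_zero hK hν hg (hν.mono fun x hx => hx.1)
    (isOpen_lt (by fun_prop) (by fun_prop)) ⟨e, by simp [he, hδ1]⟩ hcone
  have hcont : ∀ u : C(E, ℝ), ∫ x, u x * g x ∂ν = 0 := by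
    refine integral_mul_eq_zero_of_separatesPoints hK hν hg (S := range innerSq)
      (fun x hx y hy hxy => ⟨innerSq x, mem_range_self x, ?_⟩) fun l hl => ?_
    · simpa [real_inner_self_eq_norm_sq, hx.1] using
        (inner_sq_ne_one_of_mem_sphericalCap hδ0 hy hx hxy.symm).symm
    · obtain ⟨L, rfl⟩ : l ∈ range (List.map (innerSq (E := E))) := range_list_map _ ▸ hl
      simpa only [list_prod_map_innerSq_apply] using hprod L
  exact ae_eq_zero_of_integral_contDiff_smul_eq_zero hg.locallyIntegrable fun φ hφ _ =>
    hcont ⟨φ, hφ.continuous⟩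

end SphericalCap

theorem dqnn_universality_relu (N : ℕ) (k : Fin N) (δ : ℝ) (hδ : 0 < δ)
    (G : Set (EuclideanSpace ℝ (Fin N))) (hGmeas : MeasurableSet G)
    (hGsphere : ∀ x ∈ G, ‖x‖ = 1) (hGhalf : ∀ x ∈ G, δ ≤ x k)
    (μ : Measure (EuclideanSpace ℝ (Fin N))) [IsFiniteMeasure μ]
    (f : EuclideanSpace ℝ (Fin N) → ℝ) (hf : MemLp f 2 (μ.restrict G))
    (ε : ℝ) (hε : 0 < ε) :
    ∃ (n_s : ℕ) (z : Fin n_s → EuclideanSpace ℝ (Fin N)) (a c α : Fin n_s → ℝ),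
      (∀ j, ‖z j‖ = 1) ∧ (∀ j, δ ≤ z j k) ∧ (∀ j, 0 < a j) ∧
      (∀ j, c j ∈ Set.Icc (0:ℝ) 1) ∧
      ∫ x in G, ((∑ j, α j * max 0 (a j * (⟪x, z j⟫ ^ 2 - c j))) - f x) ^ 2 ∂μ < ε := by
  set e : EuclideanSpace ℝ (Fin N) := EuclideanSpace.single k 1
  have he : ‖e‖ = 1 := by simp [e]
  have hGcap : ∀ x ∈ G, x ∈ sphericalCap e δ := fun x hx =>
    mem_sphericalCap_single.2 ⟨hGsphere x hx, hGhalf x hx⟩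
  rcases lt_or_ge δ 1 with hδ1 | hδ1
  · have hν := ae_restrict_of_forall_mem (μ := μ) hGmeas hGcap
    obtain ⟨n, i, α, hlt⟩ := exists_integral_sum_mul_sub_sq_lt
      (ι := {p : EuclideanSpace ℝ (Fin N) × ℝ // p.1 ∈ sphericalCap e δ ∧ p.2 ∈ Icc 0 1})
      (φ := fun p x => max 0 (⟪x, p.1.1⟫ ^ 2 - p.1.2))
      (fun p => memLp_of_ae_mem_isCompact (isCompact_sphericalCap e δ) hν (by fun_prop) 2)
      (fun g hg => Lp.eq_zero_iff_ae_eq_zero.2 <|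
        ae_eq_zero_of_integral_max_inner_sq_sub_mul_eq_zero he hδ hδ1 hν
          ((Lp.memLp g).integrable one_le_two) fun z hz c hc => hg ⟨(z, c), hz, hc⟩) hf hε
    exact ⟨n, fun j => (i j).1.1, fun _ => 1, fun j => (i j).1.2, α,
      fun j => (mem_sphericalCap_single.1 (i j).2.1).1,
      fun j => (mem_sphericalCap_single.1 (i j).2.1).2, fun _ => one_pos,
      fun j => (i j).2.2, by simpa using hlt⟩
  rcases G.eq_empty_or_nonempty with rfl | ⟨x₀, hx₀⟩
  · exact ⟨0, Fin.elim0, Fin.elim0, Fin.elim0, (·.elim0), (·.elim0), (·.elim0), (·.elim0),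
      by simpa using hε⟩
  have hGe : ∀ x ∈ G, x = e := fun x hx => eq_of_mem_sphericalCap_of_one_le he hδ1 (hGcap x hx)
  refine ⟨1, fun _ => e, fun _ => 1, fun _ => 0, fun _ => f e, fun _ => he,
    fun _ => (mem_sphericalCap_single.1 (hGe x₀ hx₀ ▸ hGcap x₀ hx₀)).2, fun _ => one_pos,
    fun _ => ⟨le_rfl, zero_le_one⟩, ?_⟩
  rw [setIntegral_congr_fun hGmeas (g := 0) fun x hx => by simp [hGe x hx, he]]
  simpa using hε
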